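/- For an asymptotically periodic Markov operator cocycle (P,σ), the following are equivalent: (1) (P,σ) is exact; (2) (P,σ) is prior mixing for inhomogeneous observables in B(Ω, L^∞(X,m)); (3) (P,σ) is posterior mixing for inhomogeneous observables in B(Ω, L^∞(X,m)); (4) (P,σ) is asymptotically stable (period r = 1). -/

import Mathlib

open MeasureTheory Filter Topology

/-- The cocycle `P_ω^{(n)} = P_{σ^{n-1}ω} ∘ ⋯ ∘ P_ω` generated by a family of
operators over the driving system `σ`. -/
noncomputable def coc {Ω M : Type*} [Monoid M] (P : Ω → M) (σ : Ω → Ω) : ℕ → Ω → M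
  | 0, _ => 1
  | n + 1, ω => P (σ^[n] ω) * coc P σ n ω

/-!
Exactness gives prior mixing through the bound `|∫ u v| ≤ ‖u‖₁ ‖v‖_∞`, prior mixing trivially
gives posterior mixing, and asymptotic stability gives exactness because the cocycle preserves
integrals, which forces `λ_ω(f) = ∫ f`. The substance is posterior mixing ⇒ stability.

If there are two indices `i ≠ j`, then `g_i^ω - g_j^ω` has mean zero and is carried by the
cocycle to `g_{ρ i} - g_{ρ j}`, of norm `2` by disjointness of supports. A single mean-zero `f`
approximates `ω ↦ g_i^ω - g_j^ω` on a set of positive measure, and a strongly measurable family of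
almost norming `L^∞` observables (chosen among norming functionals of a countable dense set, so
that the choice is measurable) keeps the correlations of `f` above `1` along every orbit starting
in that set, contradicting posterior mixing. So the index set is a singleton (it is nonempty since
integrals are preserved), and the decomposition is then asymptotic stability.
-/

section Pairing

variable {X : Type*} [MeasurableSpace X] {m : Measure X}

theorem integral_mul_eq_lpPairing (u : Lp ℝ 1 m) (v : Lp ℝ ⊤ m) :
    ∫ x, u x * v x ∂m = (ContinuousLinearMap.mul ℝ ℝ).lpPairing m 1 ⊤ u v := by
  simpa using ((ContinuousLinearMap.mul ℝ ℝ).lpPairing_eq_integral u v).symm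

theorem abs_integral_mul_le (u : Lp ℝ 1 m) (v : Lp ℝ ⊤ m) :
    |∫ x, u x * v x ∂m| ≤ ‖u‖ * ‖v‖ := by
  set B := ContinuousLinearMap.mul ℝ ℝ
  have h : ∫ x, u x * v x ∂m = L1.integral (B.holder 1 u v) := by
    rw [L1.integral_eq_integral]
    refine integral_congr_ae ?_
    filter_upwards [B.coeFn_holder (r := 1) u v] with x hx
    simp [hx, B]
  rw [h, ← Real.norm_eq_abs]
  calc _ ≤ ‖B.holder 1 u v‖ := L1.norm_integral_le _
    _ ≤ ‖B‖ * ‖u‖ * ‖v‖ := B.norm_holder_apply_apply_le u v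
    _ ≤ ‖u‖ * ‖v‖ := by grw [ContinuousLinearMap.opNorm_mul_le, one_mul]

theorem abs_integral_mul_sub_integral_mul_le (u u' : Lp ℝ 1 m) (v : Lp ℝ ⊤ m) :
    |∫ x, u x * v x ∂m - ∫ x, u' x * v x ∂m| ≤ ‖u - u'‖ * ‖v‖ := by
  simpa only [integral_mul_eq_lpPairing, map_sub, sub_apply] using
    abs_integral_mul_le (u - u') v

theorem Lp.exists_norm_le_one_integral_mul_eq_norm (u : Lp ℝ 1 m) :
    ∃ v : Lp ℝ ⊤ m, ‖v‖ ≤ 1 ∧ ∫ x, u x * v x ∂m = ‖u‖ := by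
  set s : X → ℝ := fun x => if 0 ≤ u x then 1 else -1
  have hs_meas : Measurable s :=
    Measurable.ite (measurableSet_le measurable_const (Lp.stronglyMeasurable u).measurable)
      measurable_const measurable_const
  have hs_le : ∀ x, ‖s x‖ ≤ 1 := fun x => by simp only [s]; split_ifs <;> simp
  have hs : MemLp s ⊤ m :=
    memLp_top_of_bound hs_meas.aestronglyMeasurable 1 (Eventually.of_forall hs_le)
  refine ⟨hs.toLp s, ?_, ?_⟩
  · rw [Lp.norm_toLp, eLpNorm_exponent_top]
    exact ENNReal.toReal_le_of_le_ofReal zero_le_one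
      (eLpNormEssSup_le_of_ae_bound (Eventually.of_forall hs_le))
  · rw [L1.norm_eq_integral_norm]
    refine integral_congr_ae ?_
    filter_upwards [hs.coeFn_toLp] with x hx
    rw [hx, Real.norm_eq_abs]
    simp only [s]
    split_ifs with h
    · rw [mul_one, abs_of_nonneg h]
    · rw [mul_neg_one, abs_of_neg (not_le.1 h)]

end Pairing

section LOne

variable {X : Type*} [MeasurableSpace X] {m : Measure X}

theorem L1.norm_eq_integral_of_nonneg {f : Lp ℝ 1 m} (hf : 0 ≤ f) : ‖f‖ = ∫ x, f x ∂m := by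
  rw [L1.norm_eq_integral_norm]
  refine integral_congr_ae ?_
  filter_upwards [(Lp.coeFn_nonneg f).2 hf] with x hx
  rw [Real.norm_eq_abs, abs_of_nonneg hx]

theorem L1.abs_integral_le_norm (f : Lp ℝ 1 m) : |∫ x, f x ∂m| ≤ ‖f‖ := by
  rw [← L1.integral_eq_integral, ← Real.norm_eq_abs]
  exact L1.norm_integral_le f

theorem L1.integral_coeFn_add (f g : Lp ℝ 1 m) :
    ∫ x, (f + g) x ∂m = ∫ x, f x ∂m + ∫ x, g x ∂m := by
  simp only [← L1.integral_eq_integral, L1.integral_add]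

theorem L1.integral_coeFn_sub (f g : Lp ℝ 1 m) :
    ∫ x, (f - g) x ∂m = ∫ x, f x ∂m - ∫ x, g x ∂m := by
  simp only [← L1.integral_eq_integral, L1.integral_sub]

theorem L1.integral_coeFn_smul (c : ℝ) (f : Lp ℝ 1 m) :
    ∫ x, (c • f) x ∂m = c * ∫ x, f x ∂m := by
  simp only [← L1.integral_eq_integral, L1.integral_smul, smul_eq_mul]

theorem L1.norm_sub_eq_two_of_inf_eq_zero {a b : Lp ℝ 1 m} (ha : 0 ≤ a) (hb : 0 ≤ b)
    (ha₁ : ∫ x, a x ∂m = 1) (hb₁ : ∫ x, b x ∂m = 1) (hab : a ⊓ b = 0) : ‖a - b‖ = 2 := by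
  have h : |a - b| = a + b := by
    have h_sup := inf_add_sup a b
    rw [hab, zero_add] at h_sup
    rw [← sup_sub_inf_eq_abs_sub, inf_comm, hab, sub_zero, sup_comm, h_sup]
  rw [← norm_abs_eq_norm, h, L1.norm_eq_integral_of_nonneg (add_nonneg ha hb),
    L1.integral_coeFn_add, ha₁, hb₁]
  norm_num

theorem L1.integral_coeFn_const [IsProbabilityMeasure m] (c : ℝ) :
    ∫ x, (Lp.const 1 m c) x ∂m = c := by
  rw [integral_congr_ae (Lp.coeFn_const (p := 1) (μ := m) (c := c))]
  simp

theorem L1.exists_integral_eq_zero_norm_sub_le [IsProbabilityMeasure m] (f : Lp ℝ 1 m) :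
    ∃ f₀ : Lp ℝ 1 m, ∫ x, f₀ x ∂m = 0 ∧
      ∀ v : Lp ℝ 1 m, ∫ x, v x ∂m = 0 → ‖f₀ - v‖ ≤ 2 * ‖f - v‖ := by
  set one : Lp ℝ 1 m := Lp.const 1 m 1
  have h_one : ∫ x, one x ∂m = 1 := L1.integral_coeFn_const 1
  have h_norm_one : ‖one‖ = 1 := by simp [one, Lp.norm_const]
  refine ⟨f - (∫ x, f x ∂m) • one, ?_, fun v hv => ?_⟩
  · rw [L1.integral_coeFn_sub, L1.integral_coeFn_smul, h_one, mul_one, sub_self]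
  · have h_int : ∫ x, f x ∂m = ∫ x, (f - v) x ∂m := by
      rw [L1.integral_coeFn_sub, hv, sub_zero]
    calc ‖f - (∫ x, f x ∂m) • one - v‖ = ‖(f - v) - (∫ x, (f - v) x ∂m) • one‖ := by
          rw [h_int, sub_right_comm]
      _ ≤ ‖f - v‖ + |∫ x, (f - v) x ∂m| * ‖one‖ := by
          grw [norm_sub_le, norm_smul, Real.norm_eq_abs]
      _ ≤ 2 * ‖f - v‖ := by
          grw [h_norm_one, mul_one, L1.abs_integral_le_norm]
          linarith

end LOne

section Measurable

variable {Ω : Type*} [MeasurableSpace Ω]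

theorem MeasureTheory.StronglyMeasurable.exists_measure_preimage_ball_ne_zero
    {E : Type*} [PseudoMetricSpace E] {μ : Measure Ω} [NeZero μ] {u : Ω → E}
    (hu : StronglyMeasurable u) {δ : ℝ} (hδ : 0 < δ) :
    ∃ f : E, μ (u ⁻¹' Metric.ball f δ) ≠ 0 := by
  obtain ⟨c, hc, h_range⟩ := hu.isSeparable_range
  by_contra! h
  have h_cover : Set.univ ⊆ ⋃ f ∈ c, u ⁻¹' Metric.ball f δ := fun ω _ => by
    obtain ⟨f, hf, hdist⟩ := Metric.mem_closure_iff.1 (h_range ⟨ω, rfl⟩) δ hδ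
    exact Set.mem_biUnion hf (by simpa [dist_comm] using hdist)
  exact NeZero.ne μ (Measure.measure_univ_eq_zero.1
    (measure_mono_null h_cover ((measure_biUnion_null_iff hc).2 fun f _ => h f)))

variable {X : Type*} [MeasurableSpace X] {m : Measure X}

theorem exists_stronglyMeasurable_integral_mul_ge {u : Ω → Lp ℝ 1 m}
    (hu : StronglyMeasurable u) {ε : ℝ} (hε : 0 < ε) :
    ∃ G : Ω → Lp ℝ ⊤ m, StronglyMeasurable G ∧ (∀ ω, ‖G ω‖ ≤ 1) ∧
      ∀ ω, ‖u ω‖ - ε ≤ ∫ x, u ω x * G ω x ∂m := by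
  classical
  obtain ⟨c, hc, h_range⟩ := hu.isSeparable_range
  obtain ⟨e, he⟩ := (hc.insert 0).exists_eq_range (Set.insert_nonempty _ _)
  choose H hH_le hH using fun k => Lp.exists_norm_le_one_integral_mul_eq_norm (e k)
  have h_near : ∀ ω, ∃ k, dist (u ω) (e k) < ε / 2 := fun ω => by
    obtain ⟨f, hf, hdist⟩ := Metric.mem_closure_iff.1 (h_range ⟨ω, rfl⟩) (ε / 2) (half_pos hε)
    obtain ⟨k, rfl⟩ : f ∈ Set.range e := he ▸ Set.mem_insert_of_mem _ hf
    exact ⟨k, hdist⟩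
  have h_index : Measurable fun ω => Nat.find (h_near ω) :=
    measurable_find h_near fun k => measurableSet_lt
      ((continuous_id.dist continuous_const).comp_stronglyMeasurable hu).measurable
      measurable_const
  refine ⟨fun ω => H (Nat.find (h_near ω)),
    continuous_of_discreteTopology.comp_stronglyMeasurable h_index.stronglyMeasurable,
    fun ω => hH_le _, fun ω => ?_⟩
  set k := Nat.find (h_near ω)
  have hk : ‖u ω - e k‖ < ε / 2 := by rw [← dist_eq_norm]; exact Nat.find_spec (h_near ω)
  have h_diff := abs_le.1 (abs_integral_mul_sub_integral_mul_le (u ω) (e k) (H k))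
  have h_err : ‖u ω - e k‖ * ‖H k‖ ≤ ε / 2 := by
    grw [hH_le k, mul_one]; exact hk.le
  show ‖u ω‖ - ε ≤ ∫ x, u ω x * H k x ∂m
  linarith [hH k, norm_sub_norm_le (u ω) (e k)]

end Measurable

section Markov

variable {X : Type*} [MeasurableSpace X] {m : Measure X}

structure IsMarkov (T : Module.End ℝ (Lp ℝ 1 m)) : Prop where
  nonneg : ∀ f : Lp ℝ 1 m, 0 ≤ f → 0 ≤ T f
  integral_eq : ∀ f : Lp ℝ 1 m, ∫ x, (T f) x ∂m = ∫ x, f x ∂m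

theorem IsMarkov.abs_apply_le {T : Module.End ℝ (Lp ℝ 1 m)} (hT : IsMarkov T)
    (f : Lp ℝ 1 m) : |T f| ≤ T |f| := by
  refine abs_le'.2 ⟨?_, ?_⟩
  · rw [← sub_nonneg, ← map_sub]
    exact hT.nonneg _ (sub_nonneg.2 (le_abs_self f))
  · rw [← map_neg, ← sub_nonneg, ← map_sub]
    exact hT.nonneg _ (sub_nonneg.2 (neg_le_abs f))

theorem IsMarkov.norm_apply_le {T : Module.End ℝ (Lp ℝ 1 m)} (hT : IsMarkov T)
    (f : Lp ℝ 1 m) : ‖T f‖ ≤ ‖f‖ := by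
  have h_abs : 0 ≤ |f| := abs_nonneg f
  have h_T_abs : 0 ≤ T |f| := hT.nonneg _ h_abs
  calc ‖T f‖ ≤ ‖T |f|‖ := by
        refine norm_le_norm_of_abs_le_abs ?_
        rw [abs_of_nonneg h_T_abs]
        exact hT.abs_apply_le f
    _ = ‖f‖ := by
        rw [L1.norm_eq_integral_of_nonneg h_T_abs, hT.integral_eq,
          ← L1.norm_eq_integral_of_nonneg h_abs, norm_abs_eq_norm]

end Markov

section Cocycle

variable {X : Type*} [MeasurableSpace X] {m : Measure X}
  {Ω : Type*} {σ : Ω → Ω} {P : Ω → Module.End ℝ (Lp ℝ 1 m)} {ω : Ω}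

theorem MeasureTheory.MeasurePreserving.ae_forall_iterate [MeasurableSpace Ω] {μ : Measure Ω}
    (hσ : MeasurePreserving σ μ μ) {p : Ω → Prop} (hp : ∀ᵐ ω ∂μ, p ω) :
    ∀ᵐ ω ∂μ, ∀ n, p (σ^[n] ω) :=
  ae_all_iff.2 fun n => (hσ.iterate n).quasiMeasurePreserving.ae hp

theorem coc_succ_apply (n : ℕ) (f : Lp ℝ 1 m) :
    coc P σ (n + 1) ω f = P (σ^[n] ω) (coc P σ n ω f) := rfl

theorem norm_coc_apply_le (hP : ∀ n, IsMarkov (P (σ^[n] ω))) (n : ℕ) (f : Lp ℝ 1 m) :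
    ‖coc P σ n ω f‖ ≤ ‖f‖ := by
  induction n with
  | zero => rfl
  | succ n ih => exact ((hP n).norm_apply_le _).trans ih

theorem integral_coc_apply (hP : ∀ n, IsMarkov (P (σ^[n] ω))) (n : ℕ) (f : Lp ℝ 1 m) :
    ∫ x, (coc P σ n ω f) x ∂m = ∫ x, f x ∂m := by
  induction n with
  | zero => rfl
  | succ n ih => rw [coc_succ_apply, (hP n).integral_eq, ih]

theorem integral_eq_of_tendsto_norm_coc_sub (hP : ∀ n, IsMarkov (P (σ^[n] ω)))
    {f v : Lp ℝ 1 m} (h : Tendsto (fun n => ‖coc P σ n ω (f - v)‖) atTop (𝓝 0)) :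
    ∫ x, f x ∂m = ∫ x, v x ∂m := by
  have h_le : ∀ n, |∫ x, f x ∂m - ∫ x, v x ∂m| ≤ ‖coc P σ n ω (f - v)‖ := fun n => by
    rw [← L1.integral_coeFn_sub, ← integral_coc_apply hP n]
    exact L1.abs_integral_le_norm _
  exact sub_eq_zero.1 (abs_nonpos_iff.1 (ge_of_tendsto' h h_le))

theorem coc_apply_of_apply_eq {ι : Type*} {g : ι → Ω → Lp ℝ 1 m} {ρ : Ω → Equiv.Perm ι}
    (hg : ∀ n i, P (σ^[n] ω) (g i (σ^[n] ω)) = g (ρ (σ^[n] ω) i) (σ (σ^[n] ω)))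
    (n : ℕ) (i : ι) :
    coc P σ n ω (g i ω) = g (coc ρ σ n ω i) (σ^[n] ω) := by
  induction n with
  | zero => rfl
  | succ n ih => rw [coc_succ_apply, ih, hg, ← Function.iterate_succ_apply' σ n ω]; rfl

theorem exists_one_le_integral_coc_mul {ι : Type*} {g : ι → Ω → Lp ℝ 1 m}
    {ρ : Ω → Equiv.Perm ι}
    (hdens : ∀ n i, 0 ≤ g i (σ^[n] ω) ∧ ∫ x, (g i (σ^[n] ω)) x ∂m = 1)
    (hdisj : ∀ n i j, i ≠ j → g i (σ^[n] ω) ⊓ g j (σ^[n] ω) = 0)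
    (hperm : ∀ n i, P (σ^[n] ω) (g i (σ^[n] ω)) = g (ρ (σ^[n] ω) i) (σ (σ^[n] ω)))
    (hP : ∀ n, IsMarkov (P (σ^[n] ω))) {G : ι × ι → Ω → Lp ℝ ⊤ m}
    (hG_le : ∀ p ω, ‖G p ω‖ ≤ 1)
    (hG : ∀ p ω, ‖g p.1 ω - g p.2 ω‖ - 1 / 2 ≤ ∫ x, (g p.1 ω - g p.2 ω) x * G p ω x ∂m)
    {i j : ι} (hij : i ≠ j) {f : Lp ℝ 1 m} (hf : ‖f - (g i ω - g j ω)‖ ≤ 1 / 2) (n : ℕ) :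
    ∃ p, 1 ≤ ∫ x, (coc P σ n ω f) x * G p (σ^[n] ω) x ∂m := by
  set p : ι × ι := (coc ρ σ n ω i, coc ρ σ n ω j)
  set v := g p.1 (σ^[n] ω) - g p.2 (σ^[n] ω)
  have h_coc : coc P σ n ω (g i ω - g j ω) = v := by
    rw [map_sub, coc_apply_of_apply_eq hperm n i, coc_apply_of_apply_eq hperm n j]
  have h_norm : ‖v‖ = 2 :=
    L1.norm_sub_eq_two_of_inf_eq_zero (hdens n _).1 (hdens n _).1 (hdens n _).2
      (hdens n _).2 (hdisj n _ _ ((coc ρ σ n ω).injective.ne hij))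
  have h_err : ‖coc P σ n ω f - v‖ * ‖G p (σ^[n] ω)‖ ≤ 1 / 2 := by
    grw [hG_le, mul_one, ← h_coc, ← map_sub, norm_coc_apply_le hP]
    exact hf
  have h_diff := abs_le.1 (abs_integral_mul_sub_integral_mul_le (coc P σ n ω f) v (G p (σ^[n] ω)))
  exact ⟨p, by linarith [hG p (σ^[n] ω)]⟩

end Cocycle

namespace MarkovCocycle

variable {X : Type*} [MeasurableSpace X] {m : Measure X} {Ω : Type*} [MeasurableSpace Ω]
  (Pr : Measure Ω) (σ : Ω → Ω) (P : Ω → Module.End ℝ (Lp ℝ 1 m))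

def IsExact : Prop :=
  ∀ᵐ ω ∂Pr, ∀ f : Lp ℝ 1 m, ∫ x, f x ∂m = 0 →
    Tendsto (fun n => ‖coc P σ n ω f‖) atTop (𝓝 0)

def IsPriorMixing : Prop :=
  ∀ᵐ ω ∂Pr, ∀ (f : Lp ℝ 1 m), ∫ x, f x ∂m = 0 →
    ∀ (G : Ω → Lp ℝ ⊤ m), StronglyMeasurable G → (∃ C : ℝ, ∀ ω', ‖G ω'‖ ≤ C) →
      Tendsto (fun n => ∫ x, (coc P σ n ω f) x * (G (σ^[n] ω)) x ∂m) atTop (𝓝 0)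

def IsPosteriorMixing : Prop :=
  ∀ (f : Lp ℝ 1 m), ∫ x, f x ∂m = 0 →
    ∀ (G : Ω → Lp ℝ ⊤ m), StronglyMeasurable G → (∃ C : ℝ, ∀ ω', ‖G ω'‖ ≤ C) →
      ∀ᵐ ω ∂Pr,
        Tendsto (fun n => ∫ x, (coc P σ n ω f) x * (G (σ^[n] ω)) x ∂m) atTop (𝓝 0)

def IsAsymptoticallyStable : Prop :=
  ∃ (g' : Ω → Lp ℝ 1 m) (lam' : Ω → (Lp ℝ 1 m →L[ℝ] ℝ)),
    StronglyMeasurable g' ∧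
    (∀ f : Lp ℝ 1 m, StronglyMeasurable (fun ω => lam' ω f)) ∧
    (∃ C : ℝ, ∀ ω, ‖lam' ω‖ ≤ C) ∧
    (∀ᵐ ω ∂Pr, (0 ≤ g' ω ∧ ∫ x, (g' ω) x ∂m = 1) ∧
      P ω (g' ω) = g' (σ ω) ∧
      ∀ f : Lp ℝ 1 m,
        Tendsto (fun n => ‖coc P σ n ω (f - lam' ω f • g' ω)‖) atTop (𝓝 0))

variable {Pr σ P}

theorem IsExact.isPriorMixing (h : IsExact Pr σ P) : IsPriorMixing Pr σ P := by
  filter_upwards [h] with ω hω f hf G _ hG_bdd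
  obtain ⟨C, hC⟩ := hG_bdd
  refine squeeze_zero_norm (fun n => ?_) (by simpa using (hω f hf).mul_const C)
  rw [Real.norm_eq_abs]
  exact (abs_integral_mul_le _ _).trans (by gcongr; exact hC _)

theorem IsPriorMixing.isPosteriorMixing (h : IsPriorMixing Pr σ P) :
    IsPosteriorMixing Pr σ P := fun f hf G hG hG_bdd => by
  filter_upwards [h] with ω hω using hω f hf G hG hG_bdd

theorem IsAsymptoticallyStable.isExact (hσ : MeasurePreserving σ Pr Pr)
    (hP : ∀ᵐ ω ∂Pr, IsMarkov (P ω)) (h : IsAsymptoticallyStable Pr σ P) : IsExact Pr σ P := by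
  obtain ⟨g', lam', -, -, -, h⟩ := h
  filter_upwards [h, hσ.ae_forall_iterate hP] with ω hω hPω f hf
  obtain ⟨⟨-, hg'⟩, -, h_lim⟩ := hω
  have h_lam : lam' ω f = 0 := by
    have h_int := integral_eq_of_tendsto_norm_coc_sub hPω (h_lim f)
    rwa [hf, L1.integral_coeFn_smul, hg', mul_one, eq_comm] at h_int
  simpa [h_lam] using h_lim f

variable {ι : Type*} {g : ι → Ω → Lp ℝ 1 m} {lam : ι → Ω → (Lp ℝ 1 m →L[ℝ] ℝ)}
  {ρ : Ω → Equiv.Perm ι}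

theorem nonempty_of_tendsto_norm_coc_sub_sum [IsProbabilityMeasure m] [NeZero Pr] [Fintype ι]
    (hσ : MeasurePreserving σ Pr Pr) (hP : ∀ᵐ ω ∂Pr, IsMarkov (P ω))
    (hconv : ∀ᵐ ω ∂Pr, ∀ f : Lp ℝ 1 m,
      Tendsto (fun n => ‖coc P σ n ω (f - ∑ i, lam i ω f • g i ω)‖) atTop (𝓝 0)) :
    Nonempty ι := by
  by_contra hι
  rw [not_nonempty_iff] at hι
  obtain ⟨ω, hconvω, hPω⟩ := (hconv.and (hσ.ae_forall_iterate hP)).exists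
  have h_int := integral_eq_of_tendsto_norm_coc_sub hPω (hconvω (Lp.const 1 m 1))
  simp at h_int

theorem isAsymptoticallyStable_of_subsingleton [Fintype ι] [Subsingleton ι] (i : ι)
    (hgmeas : ∀ i, StronglyMeasurable (g i))
    (hlammeas : ∀ i (f : Lp ℝ 1 m), StronglyMeasurable (fun ω => lam i ω f))
    (hlambdd : ∃ C : ℝ, ∀ i ω, ‖lam i ω‖ ≤ C)
    (hdens : ∀ᵐ ω ∂Pr, ∀ i, 0 ≤ g i ω ∧ ∫ x, (g i ω) x ∂m = 1)
    (hperm : ∀ᵐ ω ∂Pr, ∀ i, P ω (g i ω) = g (ρ ω i) (σ ω))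
    (hconv : ∀ᵐ ω ∂Pr, ∀ f : Lp ℝ 1 m,
      Tendsto (fun n => ‖coc P σ n ω (f - ∑ i, lam i ω f • g i ω)‖) atTop (𝓝 0)) :
    IsAsymptoticallyStable Pr σ P := by
  obtain ⟨C, hC⟩ := hlambdd
  refine ⟨g i, lam i, hgmeas i, hlammeas i, ⟨C, hC i⟩, ?_⟩
  filter_upwards [hdens, hperm, hconv] with ω hdensω hpermω hconvω
  refine ⟨hdensω i, by rw [hpermω i, Subsingleton.elim (ρ ω i) i], fun f => ?_⟩
  simpa only [Fintype.sum_subsingleton _ i] using hconvω f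

theorem not_isPosteriorMixing_of_ne [IsProbabilityMeasure m] [NeZero Pr] [Finite ι]
    (hσ : MeasurePreserving σ Pr Pr) (hP : ∀ᵐ ω ∂Pr, IsMarkov (P ω))
    (hgmeas : ∀ i, StronglyMeasurable (g i))
    (hdens : ∀ᵐ ω ∂Pr, ∀ i, 0 ≤ g i ω ∧ ∫ x, (g i ω) x ∂m = 1)
    (hdisj : ∀ᵐ ω ∂Pr, ∀ i j, i ≠ j → g i ω ⊓ g j ω = 0)
    (hperm : ∀ᵐ ω ∂Pr, ∀ i, P ω (g i ω) = g (ρ ω i) (σ ω)) {i j : ι} (hij : i ≠ j) :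
    ¬ IsPosteriorMixing Pr σ P := by
  intro hmix
  have hu : ∀ p : ι × ι, StronglyMeasurable fun ω => g p.1 ω - g p.2 ω :=
    fun p => (hgmeas p.1).sub (hgmeas p.2)
  choose G hG_meas hG_le hG using fun p =>
    exists_stronglyMeasurable_integral_mul_ge (hu p) (ε := 1 / 2) (by norm_num)
  obtain ⟨f, hA⟩ := (hu (i, j)).exists_measure_preimage_ball_ne_zero (μ := Pr)
    (δ := 1 / 4) (by norm_num)
  obtain ⟨f₀, hf₀, hf₀_le⟩ := L1.exists_integral_eq_zero_norm_sub_le f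
  have h_lim : ∀ᵐ ω ∂Pr, ∀ p, Tendsto
      (fun n => ∫ x, (coc P σ n ω f₀) x * (G p (σ^[n] ω)) x ∂m) atTop (𝓝 0) :=
    ae_all_iff.2 fun p => hmix f₀ hf₀ (G p) (hG_meas p) ⟨1, hG_le p⟩
  obtain ⟨ω, hωA, hω_lim, hdensω, hdisjω, hpermω, hPω⟩ :=
    Measure.exists_mem_of_measure_ne_zero_of_ae hA <| ae_restrict_of_ae <|
      h_lim.and <| (hσ.ae_forall_iterate hdens).and <| (hσ.ae_forall_iterate hdisj).and <|
        (hσ.ae_forall_iterate hperm).and (hσ.ae_forall_iterate hP)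
  have h_close : ‖f₀ - (g i ω - g j ω)‖ ≤ 1 / 2 := by
    have h_int : ∫ x, (g i ω - g j ω) x ∂m = 0 := by
      have hi : ∫ x, (g i ω) x ∂m = 1 := (hdensω 0 i).2
      have hj : ∫ x, (g j ω) x ∂m = 1 := (hdensω 0 j).2
      rw [L1.integral_coeFn_sub, hi, hj, sub_self]
    have h_ball : ‖f - (g i ω - g j ω)‖ < 1 / 4 := by
      rw [← dist_eq_norm, dist_comm]; exact hωA
    linarith [hf₀_le _ h_int]
  obtain ⟨n, hn⟩ :=
    (eventually_all.2 fun p => (hω_lim p).eventually (eventually_lt_nhds one_pos)).exists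
  obtain ⟨p, hp⟩ := exists_one_le_integral_coc_mul hdensω hdisjω hpermω hPω hG_le hG hij
    h_close n
  exact (hn p).not_ge hp

end MarkovCocycle

theorem asymptotically_periodic_exact_mixing_stable_equivalences_general
    {X : Type*} [MeasurableSpace X] (m : Measure X) [IsProbabilityMeasure m]
    {Ω : Type*} [MeasurableSpace Ω] (Pr : Measure Ω) [IsProbabilityMeasure Pr]
    (σ : Ω → Ω) (hσ : MeasurePreserving σ Pr Pr)
    (P : Ω → Module.End ℝ (Lp ℝ 1 m))
    (hP : ∀ᵐ ω ∂Pr, (∀ f : Lp ℝ 1 m, 0 ≤ f → 0 ≤ P ω f) ∧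
      ∀ f : Lp ℝ 1 m, ∫ x, (P ω f) x ∂m = ∫ x, f x ∂m)
    -- asymptotic periodicity data:
    (r : ℕ)
    (g : Fin r → Ω → Lp ℝ 1 m) (lam : Fin r → Ω → (Lp ℝ 1 m →L[ℝ] ℝ))
    (ρ : Ω → Equiv.Perm (Fin r))
    (hgmeas : ∀ i, StronglyMeasurable (g i))
    (hlammeas : ∀ i (f : Lp ℝ 1 m), StronglyMeasurable (fun ω => lam i ω f))
    (hlambdd : ∃ C : ℝ, ∀ i ω, ‖lam i ω‖ ≤ C)
    (hdens : ∀ᵐ ω ∂Pr, ∀ i, 0 ≤ g i ω ∧ ∫ x, (g i ω) x ∂m = 1)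
    (hdisj : ∀ᵐ ω ∂Pr, ∀ i j, i ≠ j → g i ω ⊓ g j ω = 0)
    (hperm : ∀ᵐ ω ∂Pr, ∀ i, P ω (g i ω) = g (ρ ω i) (σ ω))
    (hconv : ∀ᵐ ω ∂Pr, ∀ f : Lp ℝ 1 m,
      Tendsto (fun n => ‖coc P σ n ω (f - ∑ i, lam i ω f • g i ω)‖)
        atTop (𝓝 0)) :
    -- (1) exactness
    ((∀ᵐ ω ∂Pr, ∀ f : Lp ℝ 1 m, ∫ x, f x ∂m = 0 →
        Tendsto (fun n => ‖coc P σ n ω f‖) atTop (𝓝 0)) ↔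
      -- (2) prior mixing for inhomogeneous observables in B(Ω, L^∞)
      (∀ᵐ ω ∂Pr, ∀ (f : Lp ℝ 1 m), ∫ x, f x ∂m = 0 →
        ∀ (G : Ω → Lp ℝ ⊤ m), StronglyMeasurable G → (∃ C : ℝ, ∀ ω', ‖G ω'‖ ≤ C) →
          Tendsto (fun n => ∫ x, (coc P σ n ω f) x * (G (σ^[n] ω)) x ∂m)
            atTop (𝓝 0))) ∧
    -- (2) ↔ (3) posterior mixing for inhomogeneous observables in B(Ω, L^∞)
    ((∀ᵐ ω ∂Pr, ∀ (f : Lp ℝ 1 m), ∫ x, f x ∂m = 0 →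
        ∀ (G : Ω → Lp ℝ ⊤ m), StronglyMeasurable G → (∃ C : ℝ, ∀ ω', ‖G ω'‖ ≤ C) →
          Tendsto (fun n => ∫ x, (coc P σ n ω f) x * (G (σ^[n] ω)) x ∂m)
            atTop (𝓝 0)) ↔
      (∀ (f : Lp ℝ 1 m), ∫ x, f x ∂m = 0 →
        ∀ (G : Ω → Lp ℝ ⊤ m), StronglyMeasurable G → (∃ C : ℝ, ∀ ω', ‖G ω'‖ ≤ C) →
          ∀ᵐ ω ∂Pr,
            Tendsto (fun n => ∫ x, (coc P σ n ω f) x * (G (σ^[n] ω)) x ∂m)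
              atTop (𝓝 0))) ∧
    -- (3) ↔ (4) asymptotic stability
    ((∀ (f : Lp ℝ 1 m), ∫ x, f x ∂m = 0 →
        ∀ (G : Ω → Lp ℝ ⊤ m), StronglyMeasurable G → (∃ C : ℝ, ∀ ω', ‖G ω'‖ ≤ C) →
          ∀ᵐ ω ∂Pr,
            Tendsto (fun n => ∫ x, (coc P σ n ω f) x * (G (σ^[n] ω)) x ∂m)
              atTop (𝓝 0)) ↔
      (∃ (g' : Ω → Lp ℝ 1 m) (lam' : Ω → (Lp ℝ 1 m →L[ℝ] ℝ)),
        StronglyMeasurable g' ∧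
        (∀ f : Lp ℝ 1 m, StronglyMeasurable (fun ω => lam' ω f)) ∧
        (∃ C : ℝ, ∀ ω, ‖lam' ω‖ ≤ C) ∧
        (∀ᵐ ω ∂Pr, (0 ≤ g' ω ∧ ∫ x, (g' ω) x ∂m = 1) ∧
          P ω (g' ω) = g' (σ ω) ∧
          ∀ f : Lp ℝ 1 m,
            Tendsto (fun n => ‖coc P σ n ω (f - lam' ω f • g' ω)‖)
              atTop (𝓝 0)))) := by
  open MarkovCocycle in
  have hP' : ∀ᵐ ω ∂Pr, IsMarkov (P ω) := hP.mono fun ω h => ⟨h.1, h.2⟩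
  have h_tfae : [IsExact Pr σ P, IsPriorMixing Pr σ P, IsPosteriorMixing Pr σ P,
      IsAsymptoticallyStable Pr σ P].TFAE := by
    tfae_have 1 → 2 := IsExact.isPriorMixing
    tfae_have 2 → 3 := IsPriorMixing.isPosteriorMixing
    tfae_have 3 → 4 := fun h_post => by
      have : Subsingleton (Fin r) := ⟨fun i j => by_contra fun hij =>
        not_isPosteriorMixing_of_ne hσ hP' hgmeas hdens hdisj hperm hij h_post⟩
      obtain ⟨i⟩ := nonempty_of_tendsto_norm_coc_sub_sum hσ hP' hconv
      exact isAsymptoticallyStable_of_subsingleton i hgmeas hlammeas hlambdd hdens hperm hconv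
    tfae_have 4 → 1 := IsAsymptoticallyStable.isExact hσ hP'
    tfae_finish
  exact ⟨h_tfae.out 0 1, h_tfae.out 1 2, h_tfae.out 2 3⟩

/-- For an asymptotically periodic Markov operator cocycle `(P,σ)` the following
are equivalent: (1) exactness; (2) prior mixing for inhomogeneous observables in
`B(Ω, L^∞(X,m))`; (3) posterior mixing for inhomogeneous observables in
`B(Ω, L^∞(X,m))`; (4) asymptotic stability (asymptotic periodicity with
period `r = 1`). -/
theorem asymptotically_periodic_exact_mixing_stable_equivalences
    {X : Type*} [MeasurableSpace X] (m : Measure X) [IsProbabilityMeasure m]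
    {Ω : Type*} [MeasurableSpace Ω] (Pr : Measure Ω) [IsProbabilityMeasure Pr]
    (σ : Ω → Ω) (hσ : MeasurePreserving σ Pr Pr)
    (P : Ω → Module.End ℝ (Lp ℝ 1 m))
    (hP : ∀ᵐ ω ∂Pr, (∀ f : Lp ℝ 1 m, 0 ≤ f → 0 ≤ P ω f) ∧
      ∀ f : Lp ℝ 1 m, ∫ x, (P ω f) x ∂m = ∫ x, f x ∂m)
    -- asymptotic periodicity data:
    (r : ℕ) (hr : 0 < r)
    (g : Fin r → Ω → Lp ℝ 1 m) (lam : Fin r → Ω → (Lp ℝ 1 m →L[ℝ] ℝ))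
    (ρ : Ω → Equiv.Perm (Fin r))
    (hgmeas : ∀ i, StronglyMeasurable (g i))
    (hlammeas : ∀ i (f : Lp ℝ 1 m), StronglyMeasurable (fun ω => lam i ω f))
    (hlambdd : ∃ C : ℝ, ∀ i ω, ‖lam i ω‖ ≤ C)
    (hdens : ∀ᵐ ω ∂Pr, ∀ i, 0 ≤ g i ω ∧ ∫ x, (g i ω) x ∂m = 1)
    (hdisj : ∀ᵐ ω ∂Pr, ∀ i j, i ≠ j → g i ω ⊓ g j ω = 0)
    (hperm : ∀ᵐ ω ∂Pr, ∀ i, P ω (g i ω) = g (ρ ω i) (σ ω))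
    (hconv : ∀ᵐ ω ∂Pr, ∀ f : Lp ℝ 1 m,
      Tendsto (fun n => ‖coc P σ n ω (f - ∑ i, lam i ω f • g i ω)‖)
        atTop (𝓝 0)) :
    -- (1) exactness
    ((∀ᵐ ω ∂Pr, ∀ f : Lp ℝ 1 m, ∫ x, f x ∂m = 0 →
        Tendsto (fun n => ‖coc P σ n ω f‖) atTop (𝓝 0)) ↔
      -- (2) prior mixing for inhomogeneous observables in B(Ω, L^∞)
      (∀ᵐ ω ∂Pr, ∀ (f : Lp ℝ 1 m), ∫ x, f x ∂m = 0 →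
        ∀ (G : Ω → Lp ℝ ⊤ m), StronglyMeasurable G → (∃ C : ℝ, ∀ ω', ‖G ω'‖ ≤ C) →
          Tendsto (fun n => ∫ x, (coc P σ n ω f) x * (G (σ^[n] ω)) x ∂m)
            atTop (𝓝 0))) ∧
    -- (2) ↔ (3) posterior mixing for inhomogeneous observables in B(Ω, L^∞)
    ((∀ᵐ ω ∂Pr, ∀ (f : Lp ℝ 1 m), ∫ x, f x ∂m = 0 →
        ∀ (G : Ω → Lp ℝ ⊤ m), StronglyMeasurable G → (∃ C : ℝ, ∀ ω', ‖G ω'‖ ≤ C) →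
          Tendsto (fun n => ∫ x, (coc P σ n ω f) x * (G (σ^[n] ω)) x ∂m)
            atTop (𝓝 0)) ↔
      (∀ (f : Lp ℝ 1 m), ∫ x, f x ∂m = 0 →
        ∀ (G : Ω → Lp ℝ ⊤ m), StronglyMeasurable G → (∃ C : ℝ, ∀ ω', ‖G ω'‖ ≤ C) →
          ∀ᵐ ω ∂Pr,
            Tendsto (fun n => ∫ x, (coc P σ n ω f) x * (G (σ^[n] ω)) x ∂m)
              atTop (𝓝 0))) ∧
    -- (3) ↔ (4) asymptotic stability
    ((∀ (f : Lp ℝ 1 m), ∫ x, f x ∂m = 0 →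
        ∀ (G : Ω → Lp ℝ ⊤ m), StronglyMeasurable G → (∃ C : ℝ, ∀ ω', ‖G ω'‖ ≤ C) →
          ∀ᵐ ω ∂Pr,
            Tendsto (fun n => ∫ x, (coc P σ n ω f) x * (G (σ^[n] ω)) x ∂m)
              atTop (𝓝 0)) ↔
      (∃ (g' : Ω → Lp ℝ 1 m) (lam' : Ω → (Lp ℝ 1 m →L[ℝ] ℝ)),
        StronglyMeasurable g' ∧
        (∀ f : Lp ℝ 1 m, StronglyMeasurable (fun ω => lam' ω f)) ∧
        (∃ C : ℝ, ∀ ω, ‖lam' ω‖ ≤ C) ∧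
        (∀ᵐ ω ∂Pr, (0 ≤ g' ω ∧ ∫ x, (g' ω) x ∂m = 1) ∧
          P ω (g' ω) = g' (σ ω) ∧
          ∀ f : Lp ℝ 1 m,
            Tendsto (fun n => ‖coc P σ n ω (f - lam' ω f • g' ω)‖)
              atTop (𝓝 0)))) :=
  asymptotically_periodic_exact_mixing_stable_equivalences_general m Pr σ hσ P hP r g lam ρ hgmeas
    hlammeas hlambdd hdens hdisj hperm hconv
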